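/- arXiv:1103.2167 — 5 statements merged into one kernel-verified Lean document; each statement's English description precedes it below -/
import Mathlib

section
/- Let R be a commutative ring, r ∈ R, and q a list over R of length m. Let 0 ≤ i ≤ m, c ∈ R, and let p = q.take i ++ [c] ++ q.drop i be the string obtained from q by inserting c at position i (so p has length m + 1). Then for every j with i + 1 ≤ j ≤ m + 1, the prefix p.take j of p satisfies H_r(p.take j) = H_r(p) − H_r(q.drop (j−1)) · r^{j}. -/
/-! Cutting `p` at `j` gives `H_r(p) = H_r(p.take j) + H_r(p.drop j) · r^j`, and since the
inserted letter sits before position `j`, the suffix `p.drop j` is the suffix `q.drop (j - 1)`. -/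

/-- The polynomial hash of a list `x = [x₀, …, x_{k-1}]` with seed `r`:
`H_r(x) = Σ_{i=0}^{k-1} x_i · r^(i+1)`. -/
def polyHash {R : Type*} [CommRing R] (r : R) (x : List R) : R :=
  ∑ i : Fin x.length, x.get i * r ^ ((i : ℕ) + 1)

section
variable {R : Type*} [CommRing R] (r : R)

@[simp]
lemma polyHash_nil : polyHash r [] = 0 := by
  simp [polyHash]

@[simp]
lemma polyHash_cons (x : R) (xs : List R) :
    polyHash r (x :: xs) = x * r + r * polyHash r xs := by
  simp only [polyHash, List.length_cons, Fin.sum_univ_succ, List.get_eq_getElem, Fin.val_zero,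
    Fin.val_succ, List.getElem_cons_zero, List.getElem_cons_succ, Finset.mul_sum]
  ring_nf

lemma polyHash_append (a b : List R) :
    polyHash r (a ++ b) = polyHash r a + polyHash r b * r ^ a.length := by
  induction a with
  | nil => simp
  | cons x xs ih =>
    simp only [List.cons_append, polyHash_cons, ih, List.length_cons]
    ring

lemma polyHash_eq_take_add_drop (x : List R) (j : ℕ) :
    polyHash r x = polyHash r (x.take j) + polyHash r (x.drop j) * r ^ j := by
  rcases le_or_gt j x.length with hj | hj
  · conv_lhs => rw [← List.take_append_drop j x]
    rw [polyHash_append, List.length_take_of_le hj]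
  · simp [List.take_of_length_le hj.le, List.drop_of_length_le hj.le]

end

lemma List.drop_take_append_singleton_append_drop {α : Type*} (q : List α) (c : α) {i j : ℕ}
    (hij : i < j) : (q.take i ++ [c] ++ q.drop i).drop j = q.drop (j - 1) := by
  rcases le_or_gt i q.length with hi | hi
  · have hlen : (q.take i ++ [c]).length = i + 1 := by simp [hi]
    rw [List.drop_append, List.drop_eq_nil_of_le (by omega), List.nil_append, hlen, List.drop_drop]
    congr 1
    omega
  · rw [List.take_of_length_le hi.le, List.drop_of_length_le hi.le, List.append_nil,
      List.drop_of_length_le (show q.length ≤ j - 1 by omega), List.drop_eq_nil_of_le]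
    simp only [List.length_append, List.length_singleton]
    omega

theorem polyHash_take_of_insertion_general {R : Type*} [CommRing R] (r : R) (q : List R)
    (i : ℕ) (c : R)
    (p : List R) (hp : p = q.take i ++ [c] ++ q.drop i)
    (j : ℕ) (hij : i + 1 ≤ j) :
    polyHash r (p.take j) = polyHash r p - polyHash r (q.drop (j - 1)) * r ^ j := by
  have hdrop : p.drop j = q.drop (j - 1) := hp ▸ q.drop_take_append_singleton_append_drop c hij
  rw [polyHash_eq_take_add_drop r p j, hdrop]
  ring

/-- Hash of a prefix of the string `p` obtained from `q` by inserting `c` at position `i`,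
for prefix lengths `j` with `i + 1 ≤ j ≤ m + 1`. -/
theorem polyHash_take_of_insertion {R : Type*} [CommRing R] (r : R) (q : List R) (m : ℕ)
    (hm : q.length = m) (i : ℕ) (hi : i ≤ m) (c : R)
    (p : List R) (hp : p = q.take i ++ [c] ++ q.drop i)
    (j : ℕ) (hij : i + 1 ≤ j) (hjm : j ≤ m + 1) :
    polyHash r (p.take j) = polyHash r p - polyHash r (q.drop (j - 1)) * r ^ j :=
  polyHash_take_of_insertion_general r q i c p hp j hij
end

section
/- Let α be a linearly ordered type and let x, y, z, p be lists over α. If p is a prefix of x, p is a prefix of z, and x ≤ y ≤ z in the lexicographic order on lists, then p is a prefix of y. (Consequently, in a lexicographically sorted list of strings, the strings having a given prefix p form a contiguous range.) -/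
/-! Truncating to the first `n` entries is monotone for the lexicographic order, and `p` is a
prefix of `l` exactly when `l.take p.length = p`. Hence, with `n = p.length`,
`p = x.take n ≤ y.take n ≤ z.take n = p`. -/

theorem List.take_le_take_of_le {α : Type*} [LT α] [Std.Asymm (· < · : α → α → Prop)]
    [Std.Trichotomous (· < · : α → α → Prop)] {l₁ l₂ : List α} (h : l₁ ≤ l₂) (n : ℕ) :
    l₁.take n ≤ l₂.take n := by
  induction l₁ generalizing l₂ n with
  | nil => simp
  | cons a l₁ ih =>
    match l₂, n with
    | [], _ => exact absurd h (List.not_le.2 (List.nil_lt_cons a l₁))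
    | _ :: _, 0 => exact List.nil_le _
    | b :: l₂, n + 1 =>
      rcases List.cons_le_cons_iff.1 h with hab | ⟨rfl, hl⟩
      · exact List.cons_le_cons_iff.2 (.inl hab)
      · exact List.cons_le_cons_iff.2 (.inr ⟨rfl, ih hl n⟩)

/-- In the lexicographic order on lists, if `p` is a prefix of both `x` and `z` and
`x ≤ y ≤ z`, then `p` is a prefix of `y`. -/
theorem isPrefix_of_le_of_le {α : Type*} [LinearOrder α] (x y z p : List α)
    (hx : p <+: x) (hz : p <+: z) (hxy : x ≤ y) (hyz : y ≤ z) : p <+: y := by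
  -- Mathlib's `≤` on `List α` is not core's `l₁ ≤ l₂ := ¬ l₂ < l₁`; `not_lt` converts.
  have take_mono {l₁ l₂ : List α} (h : l₁ ≤ l₂) : l₁.take p.length ≤ l₂.take p.length :=
    not_lt.1 (List.take_le_take_of_le (not_lt.2 h) _)
  rw [List.prefix_iff_eq_take] at hx hz ⊢
  refine le_antisymm ?_ ?_
  · calc p = x.take p.length := hx
      _ ≤ y.take p.length := take_mono hxy
  · calc y.take p.length ≤ z.take p.length := take_mono hyz
      _ = p := hz.symm
end

section
/- Let α be a linearly ordered type, p and s lists over α, b a natural number with |p| ≤ b, and # ∈ α an element such that # < a for every element a of p and every element a of s. Then s < p in the lexicographic order if and only if (s ++ replicate b #).take b < p in the lexicographic order. -/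
namespace List

variable {α : Type*} [LT α]

theorem take_lt_iff_of_length_le {l p : List α} {n : ℕ} (h : p.length ≤ n) :
    l.take n < p ↔ l < p := by
  induction p generalizing l n with
  | nil => simp only [not_lt_nil]
  | cons a p ih =>
    obtain ⟨n, rfl⟩ : ∃ k, n = k + 1 := Nat.exists_eq_add_one.mpr (Nat.zero_lt_of_lt h)
    cases l with
    | nil => simp only [take_nil]
    | cons x l =>
      rw [take_succ_cons, cons_lt_cons_iff, cons_lt_cons_iff,
        ih (by simpa using h)]

theorem append_lt_iff_of_forall_lt {l m p : List α} (hm : ∀ a ∈ p, ∀ c ∈ m, c < a) :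
    l ++ m < p ↔ l < p := by
  induction p generalizing l with
  | nil => simp only [not_lt_nil]
  | cons a p ih =>
    cases l with
    | nil =>
      cases m with
      | nil => rfl
      | cons c m =>
        exact iff_of_true (Lex.rel (hm a mem_cons_self c mem_cons_self)) (nil_lt_cons a p)
    | cons x l =>
      rw [cons_append, cons_lt_cons_iff, cons_lt_cons_iff,
        ih fun a ha => hm a (mem_cons_of_mem _ ha)]

end List

theorem lt_iff_padded_take_lt_general {α : Type*} [LinearOrder α] (p s : List α) (b : ℕ)
    (hb : p.length ≤ b) (pad : α)
    (hp : ∀ a ∈ p, pad < a) :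
    s < p ↔ (s ++ List.replicate b pad).take b < p := by
  rw [List.take_lt_iff_of_length_le hb, List.append_lt_iff_of_forall_lt]
  intro a ha c hc
  rw [List.eq_of_mem_replicate hc]
  exact hp a ha

/-- If `|p| ≤ b` and `#` is smaller than every element of `p` and of `s`, then `s < p` in
lexicographic order iff the `b`-length prefix of `s` padded with `b` copies of `#` is
lexicographically smaller than `p`. -/
theorem lt_iff_padded_take_lt {α : Type*} [LinearOrder α] (p s : List α) (b : ℕ)
    (hb : p.length ≤ b) (pad : α)
    (hp : ∀ a ∈ p, pad < a) (hs : ∀ a ∈ s, pad < a) :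
    s < p ↔ (s ++ List.replicate b pad).take b < p :=
  lt_iff_padded_take_lt_general p s b hb pad hp
end

section
/- Let F be a finite field and let S be a finite set of lists over F, each of length at most L, all of whose elements are nonzero. If L · (|S| choose 2) < |F|, then there exists a seed r ∈ F such that the map x ↦ H_r(x) is injective on S, i.e. all the hash values of the strings in S are pairwise distinct. -/
/-!
`H_r(x)` is the value at `r` of the polynomial `Σ x_i X^(i+1)`, whose coefficients recover `x`
when its entries are nonzero. So two distinct lists of `S` collide only at the roots of a nonzero
polynomial of degree at most `L`, i.e. at no more than `L` seeds. Counting over unordered pairs,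
at most `L · (|S| choose 2) < |F|` seeds are bad, and any other seed works.
-/

open Finset Polynomial

theorem exists_injOn_of_card_collisions_le {α β F : Type*} [Fintype F] [DecidableEq β]
    (S : Finset α) (f : F → α → β) (L : ℕ)
    (hcoll : ∀ x ∈ S, ∀ y ∈ S, x ≠ y → #{r | f r x = f r y} ≤ L)
    (hcard : L * (#S).choose 2 < Fintype.card F) :
    ∃ r, Set.InjOn (f r) S := by
  classical
  -- Unordered pairs are what give `(#S).choose 2` rather than `#S * (#S - 1)`.
  let collisions : Sym2 α → Finset F := Sym2.lift ⟨fun x y => {r | f r x = f r y}, by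
    intro x y; simp only [eq_comm]⟩
  let pairs := S.offDiag.image Sym2.mk.uncurry
  obtain ⟨r, hr⟩ : ∃ r, r ∉ pairs.biUnion collisions := by
    suffices #(pairs.biUnion collisions) < #(univ : Finset F) by
      simpa using exists_mem_notMem_of_card_lt_card this
    calc #(pairs.biUnion collisions) ≤ #pairs * L := by
          refine card_biUnion_le_card_mul _ _ _ ?_
          simp only [pairs, mem_image, mem_offDiag]
          rintro _ ⟨⟨x, y⟩, ⟨hx, hy, hxy⟩, rfl⟩
          exact hcoll x hx y hy hxy
      _ < #(univ : Finset F) := by rwa [Sym2.card_image_offDiag, mul_comm, card_univ]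
  refine ⟨r, fun x hx y hy hfxy => by_contra fun hxy => hr ?_⟩
  simp only [pairs, mem_biUnion, mem_image, mem_offDiag]
  exact ⟨s(x, y), ⟨(x, y), ⟨hx, hy, hxy⟩, rfl⟩, by simpa [collisions] using hfxy⟩

theorem card_filter_eval_eq_le {R : Type*} [CommRing R] [IsDomain R] [Fintype R] [DecidableEq R]
    {p q : R[X]} (hpq : p ≠ q) :
    #{r | p.eval r = q.eval r} ≤ max p.natDegree q.natDegree :=
  calc #{r | p.eval r = q.eval r} ≤ (p - q).natDegree := by
        refine card_le_degree_of_subset_roots fun r hr => ?_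
        rw [mem_roots (sub_ne_zero.mpr hpq)]
        simpa [sub_eq_zero] using hr
    _ ≤ max p.natDegree q.natDegree := natDegree_sub_le p q

theorem List.getElem?_eq_ite_getD {M : Type*} [Zero M] [DecidableEq M] {x : List M}
    (hx : ∀ a ∈ x, a ≠ 0) (j : ℕ) :
    x[j]? = if x.getD j 0 = 0 then none else some (x.getD j 0) := by
  cases h : x[j]? with
  | none => simp [List.getD_eq_getElem?_getD, h]
  | some a => simp [List.getD_eq_getElem?_getD, h, hx a (List.mem_of_getElem? h)]

theorem List.eq_of_getD_eq_of_ne_zero {M : Type*} [Zero M] {x y : List M}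
    (hx : ∀ a ∈ x, a ≠ 0) (hy : ∀ a ∈ y, a ≠ 0) (hxy : ∀ j, x.getD j 0 = y.getD j 0) :
    x = y := by
  classical
  exact List.ext_getElem? fun j => by
    rw [List.getElem?_eq_ite_getD hx, List.getElem?_eq_ite_getD hy, hxy]

noncomputable def hashPoly {R : Type*} [CommRing R] (x : List R) : R[X] :=
  ∑ i : Fin x.length, C (x.get i) * X ^ ((i : ℕ) + 1)

section
variable {R : Type*} [CommRing R]

theorem eval_hashPoly (r : R) (x : List R) : (hashPoly x).eval r = polyHash r x := by
  simp [hashPoly, polyHash, eval_finsetSum]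

theorem coeff_hashPoly_succ (x : List R) (j : ℕ) : (hashPoly x).coeff (j + 1) = x.getD j 0 := by
  have hget (i : Fin x.length) : x.get i = x.getD i 0 := by simp
  simp only [hashPoly, hget, Fin.sum_univ_eq_sum_range (fun i => C (x.getD i 0) * X ^ (i + 1)),
    finsetSum_coeff, coeff_C_mul_X_pow, Nat.add_right_cancel_iff, sum_ite_eq, mem_range]
  split_ifs with h
  · rfl
  · exact (List.getD_eq_default _ _ (not_lt.mp h)).symm

theorem natDegree_hashPoly_le (x : List R) : (hashPoly x).natDegree ≤ x.length :=
  natDegree_sum_le_of_forall_le _ _ fun i _ =>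
    (natDegree_C_mul_X_pow_le _ _).trans i.isLt

theorem hashPoly_injOn :
    Set.InjOn (hashPoly (R := R)) {x | ∀ a ∈ x, a ≠ 0} := fun x hx y hy hxy =>
  List.eq_of_getD_eq_of_ne_zero hx hy fun j => by
    rw [← coeff_hashPoly_succ, ← coeff_hashPoly_succ, hxy]
end

/-- If `L · (|S| choose 2) < |F|` then some seed `r` makes the polynomial hash injective on
the finite set `S` of lists of nonzero elements, each of length at most `L`. -/
theorem exists_injective_seed {F : Type*} [Field F] [Fintype F]
    (L : ℕ) (S : Finset (List F))
    (hlen : ∀ x ∈ S, x.length ≤ L) (h0 : ∀ x ∈ S, ∀ a ∈ x, a ≠ 0)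
    (hcard : L * (S.card.choose 2) < Fintype.card F) :
    ∃ r : F, Set.InjOn (fun x => polyHash r x) ↑S := by
  classical
  refine exists_injOn_of_card_collisions_le S (fun r x => polyHash r x) L ?_ hcard
  intro x hx y hy hxy
  simp only [← eval_hashPoly]
  calc _ ≤ max (hashPoly x).natDegree (hashPoly y).natDegree :=
        card_filter_eval_eq_le (hashPoly_injOn.ne (h0 x hx) (h0 y hy) hxy)
    _ ≤ L := max_le ((natDegree_hashPoly_le x).trans (hlen x hx))
        ((natDegree_hashPoly_le y).trans (hlen y hy))
end

section
/- Let α be a type with decidable equality and let q and p be lists over α, with m = |q|. The Levenshtein edit distance between q and p (with unit costs for insertion, deletion, and substitution) is at most 1 if and only if p = q, or p = q.eraseIdx i for some i < m, or p = q.set i c for some i < m and c ∈ α, or p = q.insertIdx i c for some i ≤ m and c ∈ α. -/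
namespace Levenshtein

structure Cost (α β δ : Type*) where
  delete : α → δ
  insert : β → δ
  substitute : α → β → δ

def defaultCost {α : Type*} [DecidableEq α] : Cost α α ℕ where
  delete _ := 1
  insert _ := 1
  substitute a b := if a = b then 0 else 1

def impl {α β δ : Type*} [AddZeroClass δ] [Min δ]
    (C : Cost α β δ)
    (xs : List α) (y : β) (d : {r : List δ // 0 < r.length}) : {r : List δ // 0 < r.length} :=
  let ⟨ds, w⟩ := d
  xs.zip (ds.zip ds.tail) |>.foldr
    (init := ⟨[ds.getLast (List.ne_nil_of_length_pos w) + C.insert y], by simp⟩)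
    (fun ⟨x, d₀, d₁⟩ ⟨r, w⟩ =>
      ⟨min (C.delete x + r[0]'w) (min (C.insert y + d₀) (C.substitute x y + d₁)) :: r, by simp⟩)

end Levenshtein

open Levenshtein

def suffixLevenshtein {α β δ : Type*} [AddZeroClass δ] [Min δ] (C : Cost α β δ)
    (xs : List α) (ys : List β) : {r : List δ // 0 < r.length} :=
  ys.foldr
    (impl C xs)
    (xs.foldr (init := ⟨[0], by simp⟩) (fun a ⟨r, w⟩ => ⟨(C.delete a + r[0]'w) :: r, by simp⟩))

def levenshtein {α β δ : Type*} [AddZeroClass δ] [Min δ] (C : Cost α β δ)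
    (xs : List α) (ys : List β) : δ :=
  let ⟨r, w⟩ := suffixLevenshtein C xs ys
  r[0]'w

/-! The distance `d` and the relation "`p` is `q` or one edit away from `q`" satisfy the same
recursion on the first letters. Since deletions and insertions cost `1`, the Levenshtein
recursion gives `d (x :: xs) (y :: ys) ≤ 1` iff `xs = y :: ys`, or `x :: xs = ys`, or the
substitution branch fits, i.e. `xs = ys` when `x ≠ y` and `d xs ys ≤ 1` when `x = y`. On the
other side, a single edit of `x :: xs` either acts at position `0` (giving the same three
equations) or keeps the head and edits the tail. -/

section Recursion

variable {α β δ : Type*} [AddZeroClass δ] [Min δ] (C : Levenshtein.Cost α β δ)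

namespace Levenshtein

theorem tail_impl_cons (x : α) (xs : List α) (y : β) (d : {r : List δ // 0 < r.length})
    (h : 0 < d.1.tail.length) :
    (impl C (x :: xs) y d).1.tail = (impl C xs y ⟨d.1.tail, h⟩).1 :=
  match d, h with | ⟨_ :: _ :: _, _⟩, _ => rfl

theorem head_impl_cons (x : α) (xs : List α) (y : β) (d : {r : List δ // 0 < r.length})
    (h : 0 < d.1.tail.length) :
    (impl C (x :: xs) y d).1[0]'(impl C (x :: xs) y d).2 =
      min (C.delete x + (impl C xs y ⟨d.1.tail, h⟩).1[0]'(impl C xs y _).2)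
        (min (C.insert y + d.1[0]'d.2) (C.substitute x y + d.1.tail[0])) :=
  match d, h with | ⟨_ :: _ :: _, _⟩, _ => rfl

theorem length_impl (xs : List α) (y : β) (d : {r : List δ // 0 < r.length})
    (h : d.1.length = xs.length + 1) : (impl C xs y d).1.length = xs.length + 1 := by
  induction xs generalizing d with
  | nil => rfl
  | cons x xs ih =>
    match d, h with
    | ⟨_ :: d :: ds, _⟩, h => exact congrArg (· + 1) (ih ⟨d :: ds, by simp⟩ (by simpa using h))

end Levenshtein

open Levenshtein

theorem levenshtein_eq_head_suffixLevenshtein (xs : List α) (ys : List β) :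
    levenshtein C xs ys = (suffixLevenshtein C xs ys).1[0]'(suffixLevenshtein C xs ys).2 :=
  rfl

theorem suffixLevenshtein_cons_right (xs : List α) (y : β) (ys : List β) :
    suffixLevenshtein C xs (y :: ys) = impl C xs y (suffixLevenshtein C xs ys) :=
  rfl

theorem length_suffixLevenshtein (xs : List α) (ys : List β) :
    (suffixLevenshtein C xs ys).1.length = xs.length + 1 := by
  induction ys with
  | nil => induction xs <;> simp_all [suffixLevenshtein]
  | cons y ys ih => exact length_impl C xs y _ ih

theorem tail_suffixLevenshtein_cons (x : α) (xs : List α) (ys : List β) :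
    (suffixLevenshtein C (x :: xs) ys).1.tail = (suffixLevenshtein C xs ys).1 := by
  induction ys with
  | nil => rfl
  | cons y ys ih =>
    have h : 0 < (suffixLevenshtein C (x :: xs) ys).1.tail.length := by
      simp [length_suffixLevenshtein]
    rw [suffixLevenshtein_cons_right, suffixLevenshtein_cons_right, tail_impl_cons C x xs y _ h]
    congr 2
    exact Subtype.ext ih

theorem levenshtein_cons_nil (x : α) (xs : List α) :
    levenshtein C (x :: xs) [] = C.delete x + levenshtein C xs [] :=
  rfl

theorem levenshtein_nil_cons (y : β) (ys : List β) :
    levenshtein C [] (y :: ys) = levenshtein C [] ys + C.insert y := by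
  obtain ⟨a, ha⟩ := List.length_eq_one_iff.mp (length_suffixLevenshtein C [] ys)
  change (suffixLevenshtein C [] ys).1.getLast _ + C.insert y =
    (suffixLevenshtein C [] ys).1[0]'(suffixLevenshtein C [] ys).2 + C.insert y
  simp only [ha, List.getLast_singleton, List.getElem_cons_zero]

theorem levenshtein_cons_cons (x : α) (xs : List α) (y : β) (ys : List β) :
    levenshtein C (x :: xs) (y :: ys) =
      min (C.delete x + levenshtein C xs (y :: ys))
        (min (C.insert y + levenshtein C (x :: xs) ys) (C.substitute x y + levenshtein C xs ys)) := by
  have h : 0 < (suffixLevenshtein C (x :: xs) ys).1.tail.length := by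
    simp [length_suffixLevenshtein]
  rw [levenshtein_eq_head_suffixLevenshtein, suffixLevenshtein_cons_right,
    head_impl_cons C x xs y _ h]
  simp only [tail_suffixLevenshtein_cons]
  rfl

end Recursion

section DefaultCost

variable {α : Type*} [DecidableEq α]

namespace Levenshtein

@[simp] theorem defaultCost_delete (a : α) : (defaultCost : Cost α α ℕ).delete a = 1 := rfl

@[simp] theorem defaultCost_insert (a : α) : (defaultCost : Cost α α ℕ).insert a = 1 := rfl

@[simp] theorem defaultCost_substitute (a b : α) :
    (defaultCost : Cost α α ℕ).substitute a b = if a = b then 0 else 1 := rfl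

end Levenshtein

local notation "lev" => levenshtein (Levenshtein.defaultCost (α := α))

theorem levenshtein_defaultCost_nil_left (ys : List α) : lev [] ys = ys.length := by
  induction ys with
  | nil => rfl
  | cons y ys ih =>
    rw [levenshtein_nil_cons, ih, Levenshtein.defaultCost_insert, List.length_cons]

theorem levenshtein_defaultCost_nil_right (xs : List α) : lev xs [] = xs.length := by
  induction xs with
  | nil => rfl
  | cons x xs ih =>
    rw [levenshtein_cons_nil, ih, Levenshtein.defaultCost_delete, List.length_cons, add_comm]

theorem levenshtein_defaultCost_eq_zero_iff : ∀ xs ys : List α, lev xs ys = 0 ↔ xs = ys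
  | [], ys => by simp [levenshtein_defaultCost_nil_left, eq_comm]
  | x :: xs, [] => by simp [levenshtein_defaultCost_nil_right]
  | x :: xs, y :: ys => by
    have ih := levenshtein_defaultCost_eq_zero_iff xs ys
    rw [levenshtein_cons_cons]
    by_cases hxy : x = y <;> simp [hxy, ih]

theorem levenshtein_defaultCost_cons_cons_le_one (x y : α) (xs ys : List α) :
    lev (x :: xs) (y :: ys) ≤ 1 ↔
      xs = y :: ys ∨ x :: xs = ys ∨ xs = ys ∨ (x = y ∧ lev xs ys ≤ 1) := by
  simp only [levenshtein_cons_cons, ← levenshtein_defaultCost_eq_zero_iff]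
  by_cases hxy : x = y
  · simp [hxy]; omega
  · simp [hxy]

end DefaultCost

theorem Nat.exists_le_succ_left {p : ℕ → Prop} {n : ℕ} :
    (∃ m ≤ n + 1, p m) ↔ p 0 ∨ ∃ m ≤ n, p (m + 1) := by
  simpa only [Nat.lt_succ_iff] using Nat.exists_lt_succ_left (n := n + 1) (p := p)

section OneEdit

variable {α : Type*}

def WithinOneEdit (q p : List α) : Prop :=
  p = q ∨ (∃ i < q.length, p = q.eraseIdx i) ∨ (∃ i < q.length, ∃ c, p = q.set i c) ∨
    ∃ i ≤ q.length, ∃ c, p = q.insertIdx i c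

theorem withinOneEdit_nil_left (p : List α) : WithinOneEdit [] p ↔ p.length ≤ 1 := by
  simp [WithinOneEdit, Nat.le_one_iff_eq_zero_or_eq_one, List.length_eq_one_iff]

theorem withinOneEdit_cons_nil (x : α) (xs : List α) :
    WithinOneEdit (x :: xs) [] ↔ xs = [] := by
  simp [WithinOneEdit, Nat.exists_le_succ_left, List.insertIdx_succ_cons]

theorem withinOneEdit_cons_cons (x y : α) (xs ys : List α) :
    WithinOneEdit (x :: xs) (y :: ys) ↔
      xs = y :: ys ∨ x :: xs = ys ∨ xs = ys ∨ (x = y ∧ WithinOneEdit xs ys) := by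
  simp only [WithinOneEdit, List.length_cons, Nat.exists_lt_succ_left, Nat.exists_le_succ_left,
    List.eraseIdx_cons_zero, List.eraseIdx_cons_succ, List.set_cons_zero, List.set_cons_succ,
    List.insertIdx_zero, List.insertIdx_succ_cons, List.cons.injEq]
  aesop

end OneEdit

theorem levenshtein_defaultCost_le_one_iff {α : Type*} [DecidableEq α] :
    ∀ q p : List α, levenshtein Levenshtein.defaultCost q p ≤ 1 ↔ WithinOneEdit q p
  | [], p => by rw [levenshtein_defaultCost_nil_left, withinOneEdit_nil_left]
  | x :: xs, [] => by simp [levenshtein_defaultCost_nil_right, withinOneEdit_cons_nil]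
  | x :: xs, y :: ys => by
    rw [levenshtein_defaultCost_cons_cons_le_one, withinOneEdit_cons_cons,
      levenshtein_defaultCost_le_one_iff xs ys]

/-- The Levenshtein edit distance (unit costs) between `q` and `p` is at most `1` iff
`p` equals `q`, or `p` is obtained from `q` by one deletion, one substitution, or one
insertion. -/
theorem levenshtein_le_one_iff {α : Type*} [DecidableEq α] (q p : List α) (m : ℕ)
    (hm : q.length = m) :
    levenshtein Levenshtein.defaultCost q p ≤ 1 ↔
      p = q ∨ (∃ i < m, p = q.eraseIdx i) ∨ (∃ i < m, ∃ c : α, p = q.set i c) ∨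
        (∃ i ≤ m, ∃ c : α, p = q.insertIdx i c) := by
  subst hm
  exact levenshtein_defaultCost_le_one_iff q p
end
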